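/- arXiv:1610.02066 — 2 statements merged into one kernel-verified Lean document; each statement's English description precedes it below -/
import Mathlib

section
/- Let G be a graph, and let each vertex be retained independently with probability p ∈ (0,1]; let T' be the number of triangles in the induced subgraph. Then Var(T') ≤ p³·T + p⁴·Σ_e T_e² + p⁵·Σ_v T_v², where T is the number of triangles of G, T_e the number of triangles containing edge e, and T_v the number containing vertex v. -/
open Finset

/-- Expectation of `f` of a random subset of `V` in which each element is retained
independently with probability `p`. -/
noncomputable def expVal (V : Type*) [Fintype V] [DecidableEq V] (p : ℝ)
    (f : Finset V → ℝ) : ℝ :=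
  ∑ S : Finset V, p ^ S.card * (1 - p) ^ (Fintype.card V - S.card) * f S

/-- Number of triangles of `G` all of whose vertices lie in `S`. -/
def triIn {V : Type*} [Fintype V] [DecidableEq V] (G : SimpleGraph V)
    [DecidableRel G.Adj] (S : Finset V) : ℕ :=
  ((G.cliqueFinset 3).filter (fun t => t ⊆ S)).card

/-- Number of triangles of `G` containing the edge `e`. -/
def triEdge {V : Type*} [Fintype V] [DecidableEq V] (G : SimpleGraph V)
    [DecidableRel G.Adj] (e : Sym2 V) : ℕ :=
  ((G.cliqueFinset 3).filter (fun t => ∀ x ∈ e, x ∈ t)).card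

/-- Number of triangles of `G` containing the vertex `v`. -/
def triVert {V : Type*} [Fintype V] [DecidableEq V] (G : SimpleGraph V)
    [DecidableRel G.Adj] (v : V) : ℕ :=
  ((G.cliqueFinset 3).filter (fun t => v ∈ t)).card

lemma expInd {V : Type*} [Fintype V] [DecidableEq V] (p : ℝ) (A : Finset V) :
    ∑ S : Finset V, p ^ S.card * (1 - p) ^ (Fintype.card V - S.card) *
      (if A ⊆ S then (1:ℝ) else 0) = p ^ A.card := by
  have h := Finset.prod_add (fun _ : V => p)
    (fun i => if i ∈ A then (0:ℝ) else (1-p)) Finset.univ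
  have hl : ∏ i : V, ((fun _ : V => p) i + (fun i => if i ∈ A then (0:ℝ) else (1-p)) i)
      = p ^ A.card := by
    have : ∀ i : V, ((fun _ : V => p) i + (fun i => if i ∈ A then (0:ℝ) else (1-p)) i)
        = if i ∈ A then p else 1 := by
      intro i; by_cases hi : i ∈ A <;> simp [hi]
    rw [Finset.prod_congr rfl fun i _ => this i, Finset.prod_ite_mem,
      Finset.univ_inter, Finset.prod_const]
  rw [hl] at h
  rw [h, Finset.powerset_univ]
  refine (Finset.sum_congr rfl fun S _ => ?_).symm
  have hcompl : ∏ i ∈ univ \ S, (if i ∈ A then (0:ℝ) else (1-p))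
      = if A ⊆ S then (1-p) ^ (Fintype.card V - S.card) else 0 := by
    by_cases hAS : A ⊆ S
    · rw [if_pos hAS]
      rw [Finset.prod_congr rfl (fun i hi => ?_), Finset.prod_const]
      · congr 1
        rw [← Finset.compl_eq_univ_sdiff, Finset.card_compl]
      · rw [Finset.mem_sdiff] at hi
        rw [if_neg (fun hiA => hi.2 (hAS hiA))]
    · rw [if_neg hAS]
      obtain ⟨a, haA, haS⟩ := Finset.not_subset.mp hAS
      exact Finset.prod_eq_zero (Finset.mem_sdiff.mpr ⟨Finset.mem_univ a, haS⟩)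
        (if_pos haA)
  rw [hcompl, Finset.prod_const]
  by_cases hAS : A ⊆ S <;> simp [hAS]

/-- If each vertex is retained independently with probability `p ∈ (0,1]` and `T'`
is the triangle count of the induced subgraph, then
`Var(T') ≤ p³·T + p⁴·Σ_e T_e² + p⁵·Σ_v T_v²`. -/
theorem stmt7 {V : Type*} [Fintype V] [DecidableEq V]
    (G : SimpleGraph V) [DecidableRel G.Adj] (p : ℝ) (hp0 : 0 < p) (hp1 : p ≤ 1) :
    expVal V p (fun S => ((triIn G S : ℝ)) ^ 2)
        - (expVal V p (fun S => (triIn G S : ℝ))) ^ 2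
      ≤ p ^ 3 * ((G.cliqueFinset 3).card : ℝ)
        + p ^ 4 * ∑ e ∈ G.edgeFinset, (triEdge G e : ℝ) ^ 2
        + p ^ 5 * ∑ v : V, (triVert G v : ℝ) ^ 2 := by
  classical
  set K := G.cliqueFinset 3 with hK
  have hcard : ∀ t ∈ K, t.card = 3 := fun t ht =>
    (SimpleGraph.mem_cliqueFinset_iff.mp ht).card_eq
  have hT : ∀ S : Finset V, ((triIn G S : ℕ) : ℝ)
      = ∑ t ∈ K, if t ⊆ S then (1:ℝ) else 0 := by
    intro S; rw [triIn, Finset.card_filter]; push_cast; rfl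
  -- first moment
  have h1 : expVal V p (fun S => (triIn G S : ℝ)) = ∑ t ∈ K, p ^ 3 := by
    unfold expVal
    simp_rw [hT, Finset.mul_sum]
    rw [Finset.sum_comm]
    refine Finset.sum_congr rfl fun t ht => ?_
    rw [expInd p t, hcard t ht]
  -- second moment
  have hT2 : ∀ S : Finset V, ((triIn G S : ℕ) : ℝ) ^ 2
      = ∑ q ∈ K ×ˢ K, if q.1 ∪ q.2 ⊆ S then (1:ℝ) else 0 := by
    intro S
    rw [hT S, sq, Finset.sum_mul_sum, ← Finset.sum_product']
    refine Finset.sum_congr rfl fun q _ => ?_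
    by_cases h1 : q.1 ⊆ S <;> by_cases h2 : q.2 ⊆ S <;>
      simp [h1, h2, Finset.union_subset_iff]
  have h2 : expVal V p (fun S => (triIn G S : ℝ) ^ 2)
      = ∑ q ∈ K ×ˢ K, p ^ (q.1 ∪ q.2).card := by
    unfold expVal
    simp_rw [hT2, Finset.mul_sum]
    rw [Finset.sum_comm]
    exact Finset.sum_congr rfl fun q _ => expInd p _
  have hsq : (expVal V p (fun S => (triIn G S : ℝ))) ^ 2
      = ∑ q ∈ K ×ˢ K, p ^ 6 := by
    rw [h1, sq, Finset.sum_mul_sum, ← Finset.sum_product']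
    refine Finset.sum_congr rfl fun q _ => ?_
    rw [← pow_add]
  have hvar : expVal V p (fun S => ((triIn G S : ℝ)) ^ 2)
        - (expVal V p (fun S => (triIn G S : ℝ))) ^ 2
      = ∑ q ∈ K ×ˢ K, (p ^ (q.1 ∪ q.2).card - p ^ 6) := by
    rw [h2, hsq, ← Finset.sum_sub_distrib]
  -- pointwise bound
  have key : ∀ q ∈ K ×ˢ K, p ^ (q.1 ∪ q.2).card - p ^ 6
      ≤ (if (q.1 ∩ q.2).card = 3 then p ^ 3 else 0)
        + (if (q.1 ∩ q.2).card = 2 then p ^ 4 else 0)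
        + (if (q.1 ∩ q.2).card = 1 then p ^ 5 else 0) := by
    intro q hq
    obtain ⟨hq1, hq2⟩ := Finset.mem_product.mp hq
    have hiu : (q.1 ∩ q.2).card + (q.1 ∪ q.2).card = q.1.card + q.2.card :=
      Finset.card_inter_add_card_union _ _
    rw [hcard _ hq1, hcard _ hq2] at hiu
    have hkle : (q.1 ∩ q.2).card ≤ 3 := by
      calc (q.1 ∩ q.2).card ≤ q.1.card := Finset.card_le_card Finset.inter_subset_left
        _ = 3 := hcard _ hq1
    have hu : (q.1 ∪ q.2).card = 6 - (q.1 ∩ q.2).card := by omega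
    rw [hu]
    have h6 : (0:ℝ) ≤ p ^ 6 := by positivity
    interval_cases h : (q.1 ∩ q.2).card <;> norm_num <;> linarith
  -- cardinality bounds
  have card3 : ((K ×ˢ K).filter (fun q => (q.1 ∩ q.2).card = 3)).card ≤ K.card := by
    apply Finset.card_le_card_of_injOn Prod.fst
    · intro q hq
      exact (Finset.mem_product.mp (Finset.mem_filter.mp hq).1).1
    · intro q hq q' hq' h
      have heq : ∀ r : Finset V × Finset V,
          r ∈ (K ×ˢ K).filter (fun q => (q.1 ∩ q.2).card = 3) → r.2 = r.1 := by
        intro r hr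
        obtain ⟨hm, hc⟩ := Finset.mem_filter.mp hr
        obtain ⟨ha, hb⟩ := Finset.mem_product.mp hm
        have hi : r.1 ∩ r.2 = r.1 :=
          Finset.eq_of_subset_of_card_le Finset.inter_subset_left
            (by rw [hc, hcard _ ha])
        have hsub : r.1 ⊆ r.2 := by rw [← hi]; exact Finset.inter_subset_right
        exact (Finset.eq_of_subset_of_card_le hsub
          (by rw [hcard _ ha, hcard _ hb])).symm
      have e1 := heq q hq; have e2 := heq q' hq'
      exact Prod.ext h (by rw [e1, e2, h])
  have card2 : ((K ×ˢ K).filter (fun q => (q.1 ∩ q.2).card = 2)).card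
      ≤ ∑ e ∈ G.edgeFinset, triEdge G e * triEdge G e := by
    calc ((K ×ˢ K).filter (fun q => (q.1 ∩ q.2).card = 2)).card
        ≤ (G.edgeFinset.biUnion fun e =>
            (K.filter fun t => ∀ x ∈ e, x ∈ t) ×ˢ
            (K.filter fun t => ∀ x ∈ e, x ∈ t)).card := by
          apply Finset.card_le_card
          intro q hq
          obtain ⟨hm, hc⟩ := Finset.mem_filter.mp hq
          obtain ⟨ha, hb⟩ := Finset.mem_product.mp hm
          obtain ⟨a, b, hab, habs⟩ := Finset.card_eq_two.mp hc
          have ha1 : a ∈ q.1 ∩ q.2 := by rw [habs]; simp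
          have hb1 : b ∈ q.1 ∩ q.2 := by rw [habs]; simp
          rw [Finset.mem_inter] at ha1 hb1
          have hadj : G.Adj a b :=
            (SimpleGraph.mem_cliqueFinset_iff.mp ha).isClique ha1.1 hb1.1 hab
          refine Finset.mem_biUnion.mpr ⟨s(a,b), ?_, ?_⟩
          · rw [SimpleGraph.mem_edgeFinset]; exact hadj
          · refine Finset.mem_product.mpr ⟨?_, ?_⟩ <;>
              refine Finset.mem_filter.mpr ⟨by assumption, ?_⟩ <;>
              intro x hx <;> rcases Sym2.mem_iff.mp hx with rfl | rfl
            exacts [ha1.1, hb1.1, ha1.2, hb1.2]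
      _ ≤ ∑ e ∈ G.edgeFinset, triEdge G e * triEdge G e := by
          refine (Finset.card_biUnion_le).trans ?_
          refine Finset.sum_le_sum fun e _ => ?_
          rw [Finset.card_product]
          rfl
  have card1 : ((K ×ˢ K).filter (fun q => (q.1 ∩ q.2).card = 1)).card
      ≤ ∑ v : V, triVert G v * triVert G v := by
    calc ((K ×ˢ K).filter (fun q => (q.1 ∩ q.2).card = 1)).card
        ≤ (Finset.univ.biUnion fun v : V =>
            (K.filter fun t => v ∈ t) ×ˢ (K.filter fun t => v ∈ t)).card := by
          apply Finset.card_le_card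
          intro q hq
          obtain ⟨hm, hc⟩ := Finset.mem_filter.mp hq
          obtain ⟨ha, hb⟩ := Finset.mem_product.mp hm
          obtain ⟨a, habs⟩ := Finset.card_eq_one.mp hc
          have ha1 : a ∈ q.1 ∩ q.2 := by rw [habs]; simp
          rw [Finset.mem_inter] at ha1
          exact Finset.mem_biUnion.mpr ⟨a, Finset.mem_univ a,
            Finset.mem_product.mpr ⟨Finset.mem_filter.mpr ⟨ha, ha1.1⟩,
              Finset.mem_filter.mpr ⟨hb, ha1.2⟩⟩⟩
      _ ≤ ∑ v : V, triVert G v * triVert G v := by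
          refine (Finset.card_biUnion_le).trans ?_
          refine Finset.sum_le_sum fun v _ => ?_
          rw [Finset.card_product]
          rfl
  -- assembly
  have hsum_ite : ∀ (c : Finset V × Finset V → Prop) [DecidablePred c] (a : ℝ),
      ∑ q ∈ K ×ˢ K, (if c q then a else 0)
        = (((K ×ˢ K).filter c).card : ℝ) * a := by
    intro c _ a
    rw [← Finset.sum_filter, Finset.sum_const, nsmul_eq_mul]
  rw [hvar]
  calc ∑ q ∈ K ×ˢ K, (p ^ (q.1 ∪ q.2).card - p ^ 6)
      ≤ ∑ q ∈ K ×ˢ K, ((if (q.1 ∩ q.2).card = 3 then p ^ 3 else 0)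
        + (if (q.1 ∩ q.2).card = 2 then p ^ 4 else 0)
        + (if (q.1 ∩ q.2).card = 1 then p ^ 5 else 0)) :=
        Finset.sum_le_sum key
    _ = (((K ×ˢ K).filter (fun q => (q.1 ∩ q.2).card = 3)).card : ℝ) * p ^ 3
        + (((K ×ˢ K).filter (fun q => (q.1 ∩ q.2).card = 2)).card : ℝ) * p ^ 4
        + (((K ×ˢ K).filter (fun q => (q.1 ∩ q.2).card = 1)).card : ℝ) * p ^ 5 := by
        rw [Finset.sum_add_distrib, Finset.sum_add_distrib,
          hsum_ite _ (p ^ 3), hsum_ite _ (p ^ 4), hsum_ite _ (p ^ 5)]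
    _ ≤ (K.card : ℝ) * p ^ 3
        + ((∑ e ∈ G.edgeFinset, triEdge G e * triEdge G e : ℕ) : ℝ) * p ^ 4
        + ((∑ v : V, triVert G v * triVert G v : ℕ) : ℝ) * p ^ 5 := by
        gcongr <;> exact_mod_cast ‹_›
    _ ≤ p ^ 3 * ((G.cliqueFinset 3).card : ℝ)
        + p ^ 4 * ∑ e ∈ G.edgeFinset, (triEdge G e : ℝ) ^ 2
        + p ^ 5 * ∑ v : V, (triVert G v : ℝ) ^ 2 := by
        push_cast
        rw [hK]
        ring_nf
        simp [sq, mul_comm]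
end

section
/- For real numbers x (the unique solution of f(i) = 1 where f(i) = a·4^{-i} + b·2^{-i} with a, b ≥ 0, a + b > 0) and any integer i ≥ 0: if i ≤ x then 1 ≤ 2^{-|i−x|}·f(i), and if i ≥ x then f(i)² ≤ 2^{-|i−x|}·f(i). Consequently min{1, f(i)²} ≤ 2^{-|i−x|}·f(i) for all i. -/
/-! Write `u = 2^{-i}` and `v = 2^{-x}`, so that `f(i) = a u² + b u` and `a v² + b v = 1`.
If `i ≤ x` then `v ≤ u` and `2^{-|i-x|} f(i) = v (a u + b) ≥ v (a v + b) = 1`; if `x ≤ i` then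
`u ≤ v` and `f(i) v = u (a u v + b v) ≤ u (a v² + b v) = u`, i.e. `f(i) ≤ u / v = 2^{-|i-x|}`. -/

lemma four_rpow_eq_sq (y : ℝ) : (4 : ℝ) ^ y = ((2 : ℝ) ^ y) ^ 2 := by
  rw [show (4 : ℝ) = 2 * 2 by norm_num, Real.mul_rpow zero_le_two zero_le_two, sq]

lemma Real.rpow_neg_abs_sub_of_le {c s t : ℝ} (hc : 0 < c) (h : s ≤ t) :
    c ^ (-|s - t|) = c ^ (-t) / c ^ (-s) := by
  rw [abs_of_nonpos (sub_nonpos.2 h), neg_neg, ← Real.rpow_sub hc]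
  ring_nf

lemma one_le_div_mul_quadratic_of_le {a b u v : ℝ} (ha : 0 ≤ a) (hv : 0 < v) (hvu : v ≤ u)
    (hone : a * v ^ 2 + b * v = 1) : 1 ≤ v / u * (a * u ^ 2 + b * u) := by
  have hu : 0 < u := hv.trans_le hvu
  calc 1 = v * (a * v + b) := by rw [← hone]; ring
    _ ≤ v * (a * u + b) := by gcongr
    _ = v / u * (a * u ^ 2 + b * u) := by field_simp

lemma quadratic_le_div_of_le {a b u v : ℝ} (ha : 0 ≤ a) (hu : 0 ≤ u) (hv : 0 < v)
    (huv : u ≤ v) (hone : a * v ^ 2 + b * v = 1) : a * u ^ 2 + b * u ≤ u / v := by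
  rw [le_div_iff₀ hv]
  calc (a * u ^ 2 + b * u) * v = u * (a * u * v + b * v) := by ring
    _ ≤ u * (a * v ^ 2 + b * v) := by
      gcongr u * (?_ + _)
      rw [sq, ← mul_assoc]
      gcongr
    _ = u := by rw [hone, mul_one]

lemma sq_le_div_mul_quadratic_of_le {a b u v : ℝ} (ha : 0 ≤ a) (hb : 0 ≤ b) (hu : 0 ≤ u)
    (hv : 0 < v) (huv : u ≤ v) (hone : a * v ^ 2 + b * v = 1) :
    (a * u ^ 2 + b * u) ^ 2 ≤ u / v * (a * u ^ 2 + b * u) := by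
  rw [sq]
  exact mul_le_mul_of_nonneg_right (quadratic_le_div_of_le ha hu hv huv hone) (by positivity)

theorem stmt18_general (a b x : ℝ) (ha : 0 ≤ a) (hb : 0 ≤ b)
    (f : ℝ → ℝ) (hf : ∀ t : ℝ, f t = a * (4 : ℝ) ^ (-t) + b * (2 : ℝ) ^ (-t))
    (hx : f x = 1) :
    ∀ i : ℕ,
      ((i : ℝ) ≤ x → 1 ≤ (2 : ℝ) ^ (-|(i : ℝ) - x|) * f i) ∧
      (x ≤ (i : ℝ) → f i ^ 2 ≤ (2 : ℝ) ^ (-|(i : ℝ) - x|) * f i) ∧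
      min 1 (f i ^ 2) ≤ (2 : ℝ) ^ (-|(i : ℝ) - x|) * f i := by
  intro i
  have hf2 : ∀ t, f t = a * ((2 : ℝ) ^ (-t)) ^ 2 + b * (2 : ℝ) ^ (-t) := fun t => by
    rw [hf, four_rpow_eq_sq]
  have hone : a * ((2 : ℝ) ^ (-x)) ^ 2 + b * (2 : ℝ) ^ (-x) = 1 := by rw [← hf2, hx]
  have hmono {s t : ℝ} (h : s ≤ t) : (2 : ℝ) ^ (-t) ≤ (2 : ℝ) ^ (-s) :=
    Real.rpow_le_rpow_of_exponent_le one_le_two (neg_le_neg h)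
  have below : (i : ℝ) ≤ x → 1 ≤ (2 : ℝ) ^ (-|(i : ℝ) - x|) * f i := fun h => by
    rw [Real.rpow_neg_abs_sub_of_le two_pos h, hf2]
    exact one_le_div_mul_quadratic_of_le ha (by positivity) (hmono h) hone
  have above : x ≤ (i : ℝ) → f i ^ 2 ≤ (2 : ℝ) ^ (-|(i : ℝ) - x|) * f i := fun h => by
    rw [abs_sub_comm, Real.rpow_neg_abs_sub_of_le two_pos h, hf2]
    exact sq_le_div_mul_quadratic_of_le ha hb (by positivity) (by positivity) (hmono h) hone
  refine ⟨below, above, ?_⟩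
  rcases le_total (i : ℝ) x with h | h
  · exact (min_le_left _ _).trans (below h)
  · exact (min_le_right _ _).trans (above h)

/-- Dyadic truncation trick: let `f(t) = a·4^{-t} + b·2^{-t}` with `a, b ≥ 0`,
`a + b > 0`, and let `x` be the (unique) real solution of `f(x) = 1`. Then for every
integer `i ≥ 0`: if `i ≤ x` then `1 ≤ 2^{-|i-x|}·f(i)`; if `i ≥ x` then
`f(i)² ≤ 2^{-|i-x|}·f(i)`; consequently `min{1, f(i)²} ≤ 2^{-|i-x|}·f(i)`. -/
theorem stmt18 (a b x : ℝ) (ha : 0 ≤ a) (hb : 0 ≤ b) (hab : 0 < a + b)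
    (f : ℝ → ℝ) (hf : ∀ t : ℝ, f t = a * (4 : ℝ) ^ (-t) + b * (2 : ℝ) ^ (-t))
    (hx : f x = 1) :
    ∀ i : ℕ,
      ((i : ℝ) ≤ x → 1 ≤ (2 : ℝ) ^ (-|(i : ℝ) - x|) * f i) ∧
      (x ≤ (i : ℝ) → f i ^ 2 ≤ (2 : ℝ) ^ (-|(i : ℝ) - x|) * f i) ∧
      min 1 (f i ^ 2) ≤ (2 : ℝ) ^ (-|(i : ℝ) - x|) * f i :=
  stmt18_general a b x ha hb f hf hx
end
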